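/- arXiv:math/0501418 — 2 statements merged into one kernel-verified Lean document; each statement's English description precedes it below -/
import Mathlib

section
/- Let A and B be lattices. For every H ∈ A ⊡ B, the box closure BoxCl(H) belongs to A □ B. Consequently, A □ B, partially ordered by set inclusion, is a lattice, in which the meet of H and K is H ∩ K and the join of H and K is BoxCl(H ∪ K). -/
/-- The pure box `a □ b = {⟨x,y⟩ : x ≤ a or y ≤ b}`. -/
def pureBox {A B : Type*} [Lattice A] [Lattice B] (a : A) (b : B) : Set (A × B) :=
  {p : A × B | p.1 ≤ a ∨ p.2 ≤ b}

/-- `a ∘ b = {⟨x,y⟩ : x ≤ a and y ≤ b}`. -/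
def pureCirc {A B : Type*} [Lattice A] [Lattice B] (a : A) (b : B) : Set (A × B) :=
  {p : A × B | p.1 ≤ a ∧ p.2 ≤ b}

/-- The box product `A □ B`: all finite (nonempty) intersections of pure boxes. -/
def BoxProd (A B : Type*) [Lattice A] [Lattice B] : Set (Set (A × B)) :=
  {H | ∃ (n : ℕ) (a : Fin (n + 1) → A) (b : Fin (n + 1) → B),
    H = ⋂ i, pureBox (a i) (b i)}

/-- `A ⊡ B`: all finite unions of pure boxes (at least one) and pure circles. -/
def BoxDot (A B : Type*) [Lattice A] [Lattice B] : Set (Set (A × B)) :=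
  {H | ∃ (m n : ℕ) (a : Fin (m + 1) → A) (b : Fin (m + 1) → B)
      (c : Fin n → A) (d : Fin n → B),
    H = (⋃ i, pureBox (a i) (b i)) ∪ ⋃ j, pureCirc (c j) (d j)}

/-- The box closure of a subset of `A × B`: intersection of all pure boxes containing it. -/
def BoxCl {A B : Type*} [Lattice A] [Lattice B] (X : Set (A × B)) : Set (A × B) :=
  ⋂ (a : A) (b : B) (_ : X ⊆ pureBox a b), pureBox a b

/-- The pure lattice tensor `a ⊠ b = (a ∘ b) ∪ ⊥_{A,B}`, where `⊥_{A,B}` consists of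
the pairs one of whose coordinates is a least element. -/
def pureTens {A B : Type*} [Lattice A] [Lattice B] (a : A) (b : B) : Set (A × B) :=
  pureCirc a b ∪ {p : A × B | IsBot p.1 ∨ IsBot p.2}

/-- A subset of `A × B` is confined if it is contained in some pure lattice tensor. -/
def Confined {A B : Type*} [Lattice A] [Lattice B] (X : Set (A × B)) : Prop :=
  ∃ (a : A) (b : B), X ⊆ pureTens a b

/-- The lattice tensor product `A ⊠ B`: all confined elements of `A □ B`. -/
def LatTens (A B : Type*) [Lattice A] [Lattice B] : Set (Set (A × B)) :=
  {H | H ∈ BoxProd A B ∧ Confined H}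

/-- `X^△ = {⟨a,b⟩ : ⟨x,y⟩ ◁ ⟨a,b⟩ for all ⟨x,y⟩ ∈ X}` where `⟨x,y⟩ ◁ ⟨a,b⟩` iff
`x ≤ a` or `y ≤ b`. -/
def trUp {A B : Type*} [Lattice A] [Lattice B] (X : Set (A × B)) : Set (A × B) :=
  {p : A × B | ∀ q ∈ X, q.1 ≤ p.1 ∨ q.2 ≤ p.2}

/-- `X^▽ = {⟨a,b⟩ : ⟨a,b⟩ ◁ ⟨x,y⟩ for all ⟨x,y⟩ ∈ X}`. -/
def trDown {A B : Type*} [Lattice A] [Lattice B] (X : Set (A × B)) : Set (A × B) :=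
  {p : A × B | ∀ q ∈ X, p.1 ≤ q.1 ∨ p.2 ≤ q.2}

/-
A pure box `u □ v` with neither `u` nor `v` a top element contains `a □ b` only if `a ≤ u` and
`b ≤ v`, and it contains `c ∘ d` iff `c ≤ u` or `d ≤ v`. So a nontrivial box contains
`H = ⋃ᵢ (aᵢ □ bᵢ) ∪ ⋃ⱼ (cⱼ ∘ dⱼ)` iff, for `S = {j | cⱼ ≤ u}`, it contains the box whose corners
are the joins `⋁ᵢ aᵢ ⊔ ⋁_{j ∈ S} cⱼ` and `⋁ᵢ bᵢ ⊔ ⋁_{j ∉ S} dⱼ`; hence `BoxCl H` is the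
intersection of these finitely many boxes, one for each `S`. Sorting the points `⟨x, y⟩` of
`⋂ᵢ (aᵢ □ bᵢ)` by the set `S = {i | x ≤ aᵢ}` writes it as the box `(⋀ᵢ aᵢ) □ (⋀ᵢ bᵢ)` together
with the circles `(⋀_{i ∈ S} aᵢ) ∘ (⋀_{i ∉ S} bᵢ)`, so `A □ B ⊆ A ⊡ B`. As `A ⊡ B` is closed
under unions, `BoxCl (H ∪ K)` lies in `A □ B` for `H, K ∈ A □ B`, and it is their join there.
-/

open Set

theorem Set.Finite.exists_isLUB {α : Type*} [SemilatticeSup α] {s : Set α} (hs : s.Finite)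
    (hne : s.Nonempty) : ∃ a, IsLUB s a :=
  ⟨_, by simpa using Finset.isLUB_sup' (hs.toFinset_nonempty.2 hne)⟩

theorem Set.Finite.exists_isGLB {α : Type*} [SemilatticeInf α] {s : Set α} (hs : s.Finite)
    (hne : s.Nonempty) : ∃ a, IsGLB s a :=
  Set.Finite.exists_isLUB (α := αᵒᵈ) hs hne

section BoxProduct

variable {A B : Type*} [Lattice A] [Lattice B]

theorem pureBox_mono {a u : A} {b v : B} (ha : a ≤ u) (hb : b ≤ v) :
    pureBox a b ⊆ pureBox u v :=
  fun _ hp => hp.imp ha.trans' hb.trans'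

theorem le_and_le_of_pureBox_subset {a u : A} {b v : B} (hu : ¬IsTop u) (hv : ¬IsTop v)
    (h : pureBox a b ⊆ pureBox u v) : a ≤ u ∧ b ≤ v := by
  obtain ⟨x, hx⟩ := not_forall.1 hu
  obtain ⟨y, hy⟩ := not_forall.1 hv
  exact ⟨(h (Or.inl le_rfl : (a, y) ∈ pureBox a b)).resolve_right hy,
    (h (Or.inr le_rfl : (x, b) ∈ pureBox a b)).resolve_left hx⟩

theorem pureCirc_subset_pureBox_iff {c u : A} {d v : B} :
    pureCirc c d ⊆ pureBox u v ↔ c ≤ u ∨ d ≤ v := by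
  refine ⟨fun h => h (⟨le_rfl, le_rfl⟩ : (c, d) ∈ pureCirc c d), ?_⟩
  rintro (h | h) p ⟨h₁, h₂⟩
  exacts [Or.inl (h₁.trans h), Or.inr (h₂.trans h)]

theorem iInter_pureBox_mem_boxProd {ι : Type*} [Finite ι] [Nonempty ι] (a : ι → A)
    (b : ι → B) : ⋂ i, pureBox (a i) (b i) ∈ BoxProd A B := by
  obtain ⟨n, ⟨e⟩⟩ := Finite.exists_equiv_fin ι
  obtain ⟨k, rfl⟩ := Nat.exists_eq_succ_of_ne_zero (n := n) fun hn =>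
    (hn ▸ e (Classical.arbitrary ι)).elim0
  exact ⟨k, a ∘ e.symm, b ∘ e.symm, (e.symm.surjective.iInter_comp _).symm⟩

theorem iUnion_union_iUnion_mem_boxDot {ι κ : Type*} [Finite ι] [Nonempty ι] [Finite κ]
    (a : ι → A) (b : ι → B) (c : κ → A) (d : κ → B) :
    (⋃ i, pureBox (a i) (b i)) ∪ ⋃ j, pureCirc (c j) (d j) ∈ BoxDot A B := by
  obtain ⟨m, ⟨e⟩⟩ := Finite.exists_equiv_fin ι
  obtain ⟨n, ⟨f⟩⟩ := Finite.exists_equiv_fin κ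
  obtain ⟨k, rfl⟩ := Nat.exists_eq_succ_of_ne_zero (n := m) fun hm =>
    (hm ▸ e (Classical.arbitrary ι)).elim0
  refine ⟨k, n, a ∘ e.symm, b ∘ e.symm, c ∘ f.symm, d ∘ f.symm, ?_⟩
  simp only [Function.comp_apply]
  rw [e.symm.surjective.iUnion_comp (fun i => pureBox (a i) (b i)),
    f.symm.surjective.iUnion_comp (fun j => pureCirc (c j) (d j))]

theorem inter_mem_boxProd {H K : Set (A × B)} (hH : H ∈ BoxProd A B) (hK : K ∈ BoxProd A B) :
    H ∩ K ∈ BoxProd A B := by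
  obtain ⟨m, a, b, rfl⟩ := hH
  obtain ⟨n, c, d, rfl⟩ := hK
  have := iInter_pureBox_mem_boxProd (Sum.elim a c) (Sum.elim b d)
  rwa [iInter_sum] at this

theorem union_mem_boxDot {H K : Set (A × B)} (hH : H ∈ BoxDot A B) (hK : K ∈ BoxDot A B) :
    H ∪ K ∈ BoxDot A B := by
  obtain ⟨m, n, a, b, c, d, rfl⟩ := hH
  obtain ⟨m', n', a', b', c', d', rfl⟩ := hK
  have := iUnion_union_iUnion_mem_boxDot (Sum.elim a a') (Sum.elim b b') (Sum.elim c c')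
    (Sum.elim d d')
  rwa [iUnion_sum, iUnion_sum, union_union_union_comm] at this

/-- The circle indexed by `(S, i, j)` is `(⋀_{S ∪ {i}} a) ∘ (⋀_{Sᶜ ∪ {j}} b)`; the extra indices
keep the meets nonempty without changing the union. -/
theorem iInter_pureBox_eq_union {ι : Type*} {a : ι → A} {b : ι → B} {a₀ : A} {b₀ : B}
    (ha₀ : IsGLB (range a) a₀) (hb₀ : IsGLB (range b) b₀) {c : Set ι → ι → A}
    {d : Set ι → ι → B} (hc : ∀ S i, IsGLB (a '' insert i S) (c S i))
    (hd : ∀ S j, IsGLB (b '' insert j Sᶜ) (d S j)) :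
    ⋂ i, pureBox (a i) (b i) =
      pureBox a₀ b₀ ∪ ⋃ k : Set ι × ι × ι, pureCirc (c k.1 k.2.1) (d k.1 k.2.2) := by
  apply subset_antisymm
  · intro p hp
    rw [mem_iInter] at hp
    by_cases hfst : ∀ i, p.1 ≤ a i
    · exact Or.inl (Or.inl (ha₀.2 (forall_mem_range.2 hfst)))
    by_cases hsnd : ∀ i, p.2 ≤ b i
    · exact Or.inl (Or.inr (hb₀.2 (forall_mem_range.2 hsnd)))
    obtain ⟨j, hj⟩ := not_forall.1 hfst
    obtain ⟨i, hi⟩ := not_forall.1 hsnd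
    refine Or.inr (mem_iUnion.2 ⟨({k | p.1 ≤ a k}, i, j), (hc _ i).2 ?_, (hd _ j).2 ?_⟩)
    · rintro _ ⟨k, hk | hk, rfl⟩
      exacts [hk ▸ (hp i).resolve_right hi, hk]
    · rintro _ ⟨k, hk | hk, rfl⟩
      exacts [hk ▸ (hp j).resolve_left hj, (hp k).resolve_left hk]
  · rintro p (hp | hp) <;> refine mem_iInter.2 fun k => ?_
    · exact pureBox_mono (ha₀.1 ⟨k, rfl⟩) (hb₀.1 ⟨k, rfl⟩) hp
    · obtain ⟨⟨S, i, j⟩, h₁, h₂⟩ := mem_iUnion.1 hp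
      by_cases hk : k ∈ S
      · exact Or.inl (h₁.trans ((hc S i).1 (mem_image_of_mem a (mem_insert_of_mem i hk))))
      · exact Or.inr (h₂.trans ((hd S j).1 (mem_image_of_mem b (mem_insert_of_mem j hk))))

theorem mem_boxDot_of_mem_boxProd {H : Set (A × B)} (hH : H ∈ BoxProd A B) :
    H ∈ BoxDot A B := by
  obtain ⟨n, a, b, rfl⟩ := hH
  obtain ⟨a₀, ha₀⟩ := (finite_range a).exists_isGLB (range_nonempty a)
  obtain ⟨b₀, hb₀⟩ := (finite_range b).exists_isGLB (range_nonempty b)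
  choose c hc using fun (S : Set (Fin (n + 1))) i =>
    (toFinite (a '' insert i S)).exists_isGLB ((insert_nonempty i S).image a)
  choose d hd using fun (S : Set (Fin (n + 1))) j =>
    (toFinite (b '' insert j Sᶜ)).exists_isGLB ((insert_nonempty j Sᶜ).image b)
  have := iUnion_union_iUnion_mem_boxDot (fun _ : Unit => a₀) (fun _ => b₀)
    (fun k : Set (Fin (n + 1)) × Fin (n + 1) × Fin (n + 1) => c k.1 k.2.1)
    (fun k => d k.1 k.2.2)
  rwa [iUnion_const, ← iInter_pureBox_eq_union ha₀ hb₀ hc hd] at this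

theorem mem_boxCl {X : Set (A × B)} {p : A × B} :
    p ∈ BoxCl X ↔ ∀ a b, X ⊆ pureBox a b → p ∈ pureBox a b := by
  simp only [BoxCl, mem_iInter]

theorem subset_boxCl (X : Set (A × B)) : X ⊆ BoxCl X :=
  fun _ hp => mem_boxCl.2 fun _ _ h => h hp

theorem boxCl_subset_pureBox {X : Set (A × B)} {a : A} {b : B} (h : X ⊆ pureBox a b) :
    BoxCl X ⊆ pureBox a b :=
  fun _ hp => mem_boxCl.1 hp a b h

theorem boxCl_subset_iff {X L : Set (A × B)} (hL : L ∈ BoxProd A B) :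
    BoxCl X ⊆ L ↔ X ⊆ L := by
  obtain ⟨n, a, b, rfl⟩ := hL
  exact ⟨(subset_boxCl X).trans, fun h => subset_iInter fun i =>
    boxCl_subset_pureBox (h.trans (iInter_subset _ i))⟩

/-- Boxes with a top corner are the whole of `A × B`, so only the others have to be compared
with the family `(u i, v i)`. -/
theorem boxCl_eq_iInter_pureBox {X : Set (A × B)} {ι : Type*} {u : ι → A} {v : ι → B}
    (hsub : ∀ i, X ⊆ pureBox (u i) (v i))
    (hmin : ∀ a b, ¬IsTop a → ¬IsTop b → X ⊆ pureBox a b → ∃ i, u i ≤ a ∧ v i ≤ b) :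
    BoxCl X = ⋂ i, pureBox (u i) (v i) := by
  refine subset_antisymm (subset_iInter fun i => boxCl_subset_pureBox (hsub i)) fun p hp => ?_
  refine mem_boxCl.2 fun a b hX => ?_
  by_cases ha : IsTop a
  · exact Or.inl (ha p.1)
  by_cases hb : IsTop b
  · exact Or.inr (hb p.2)
  obtain ⟨i, hua, hvb⟩ := hmin a b ha hb hX
  exact pureBox_mono hua hvb (mem_iInter.1 hp i)

theorem boxCl_iUnion_union_iUnion_mem_boxProd {ι κ : Type*} [Finite ι] [Nonempty ι] [Finite κ]
    (a : ι → A) (b : ι → B) (c : κ → A) (d : κ → B) :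
    BoxCl ((⋃ i, pureBox (a i) (b i)) ∪ ⋃ j, pureCirc (c j) (d j)) ∈ BoxProd A B := by
  choose u hu using fun S : Set κ =>
    ((finite_range a).union ((toFinite S).image c)).exists_isLUB
      ((range_nonempty a).mono subset_union_left)
  choose v hv using fun S : Set κ =>
    ((finite_range b).union ((toFinite Sᶜ).image d)).exists_isLUB
      ((range_nonempty b).mono subset_union_left)
  rw [boxCl_eq_iInter_pureBox (u := u) (v := v)]
  · exact iInter_pureBox_mem_boxProd u v
  · intro S
    simp only [union_subset_iff, iUnion_subset_iff]
    refine ⟨fun i => pureBox_mono ((hu S).1 (Or.inl ⟨i, rfl⟩)) ((hv S).1 (Or.inl ⟨i, rfl⟩)),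
      fun j => pureCirc_subset_pureBox_iff.2 ?_⟩
    by_cases hj : j ∈ S
    exacts [Or.inl ((hu S).1 (Or.inr ⟨j, hj, rfl⟩)), Or.inr ((hv S).1 (Or.inr ⟨j, hj, rfl⟩))]
  · intro x y hx hy hX
    simp only [union_subset_iff, iUnion_subset_iff] at hX
    have hbox i := le_and_le_of_pureBox_subset hx hy (hX.1 i)
    have hcirc j := pureCirc_subset_pureBox_iff.1 (hX.2 j)
    refine ⟨{j | c j ≤ x}, (hu _).2 ?_, (hv _).2 ?_⟩
    · rintro _ (⟨i, rfl⟩ | ⟨j, hj, rfl⟩)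
      exacts [(hbox i).1, hj]
    · rintro _ (⟨i, rfl⟩ | ⟨j, hj, rfl⟩)
      exacts [(hbox i).2, (hcirc j).resolve_left hj]

theorem boxCl_mem_boxProd {H : Set (A × B)} (hH : H ∈ BoxDot A B) : BoxCl H ∈ BoxProd A B := by
  obtain ⟨m, n, a, b, c, d, rfl⟩ := hH
  exact boxCl_iUnion_union_iUnion_mem_boxProd a b c d

end BoxProduct

/-- For `H ∈ A ⊡ B`, `BoxCl H ∈ A □ B`; consequently `A □ B` is a lattice under
inclusion, with meet the intersection and join the box closure of the union. -/
theorem stmt_3 {A B : Type*} [Lattice A] [Lattice B] :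
    (∀ H ∈ BoxDot A B, BoxCl H ∈ BoxProd A B) ∧
    ∀ H ∈ BoxProd A B, ∀ K ∈ BoxProd A B,
      H ∩ K ∈ BoxProd A B ∧ BoxCl (H ∪ K) ∈ BoxProd A B ∧
      (∀ L ∈ BoxProd A B, L ⊆ H ∩ K ↔ L ⊆ H ∧ L ⊆ K) ∧
      (∀ L ∈ BoxProd A B, BoxCl (H ∪ K) ⊆ L ↔ H ⊆ L ∧ K ⊆ L) := by
  refine ⟨fun H => boxCl_mem_boxProd, fun H hH K hK => ⟨inter_mem_boxProd hH hK, ?_,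
    fun L _ => subset_inter_iff, fun L hL => ?_⟩⟩
  · exact boxCl_mem_boxProd
      (union_mem_boxDot (mem_boxDot_of_mem_boxProd hH) (mem_boxDot_of_mem_boxProd hK))
  · rw [boxCl_subset_iff hL, union_subset_iff]
end

section
/- Let A and B be lattices with least elements, let n be a positive integer, let a_0,…,a_{n−1} ∈ A and b_0,…,b_{n−1} ∈ B. Then the box closure of H = ⋃_{i<n}(a_i ⊠ b_i) is given by BoxCl(H) = ⋃_{𝔠 ∈ F_D(n)} ( P_𝔠(a_0,…,a_{n−1}) ⊠ P_{𝔠*}(b_0,…,b_{n−1}) ). -/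
/-- `F_D(n)`: the upper subsets `𝔠` of the powerset of `n` with `∅ ∉ 𝔠` and `n ∈ 𝔠`. -/
def FD (n : ℕ) : Set (Finset (Finset (Fin n))) :=
  {c | (∀ X ∈ c, ∀ Y : Finset (Fin n), X ⊆ Y → Y ∈ c) ∧ ∅ ∉ c ∧ Finset.univ ∈ c}

/-- `𝔠* = {X ⊆ n : n − X ∉ 𝔠}`. -/
def cstar {n : ℕ} (c : Finset (Finset (Fin n))) : Finset (Finset (Fin n)) :=
  Finset.univ.filter fun X => Xᶜ ∉ c

/-- The lattice polynomial `P_𝔠(x) = ⋀_{X ∈ 𝔠} ⋁_{i ∈ X} x_i` (with value `⊥` in the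
irrelevant case `𝔠 = ∅`). -/
def Pc {L : Type*} [Lattice L] [OrderBot L] {n : ℕ}
    (c : Finset (Finset (Fin n))) (x : Fin n → L) : L :=
  if h : c.Nonempty then c.inf' h fun X => X.sup x else ⊥

open Finset

section BoxClosure

variable {A B : Type*} [Lattice A] [Lattice B]

theorem subset_BoxCl_iff {X Y : Set (A × B)} :
    Y ⊆ BoxCl X ↔ ∀ u v, X ⊆ pureBox u v → Y ⊆ pureBox u v := by
  simp only [BoxCl, Set.subset_iInter_iff]

theorem pureTens_subset_pureBox_iff {s u : A} {t v : B} :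
    pureTens s t ⊆ pureBox u v ↔ s ≤ u ∨ t ≤ v := by
  refine ⟨fun h => h (show (s, t) ∈ pureTens s t from Or.inl ⟨le_rfl, le_rfl⟩), ?_⟩
  rintro hst ⟨x, y⟩ (⟨hx, hy⟩ | hx | hy)
  · exact hst.imp hx.trans hy.trans
  · exact Or.inl (hx u)
  · exact Or.inr (hy v)

theorem iUnion_pureTens_subset_pureBox_iff {ι : Type*} {a : ι → A} {b : ι → B} {u : A} {v : B} :
    (⋃ i, pureTens (a i) (b i)) ⊆ pureBox u v ↔ ∀ i, a i ≤ u ∨ b i ≤ v := by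
  simp only [Set.iUnion_subset_iff, pureTens_subset_pureBox_iff]

theorem mem_BoxCl_iUnion_pureTens_iff {ι : Type*} {a : ι → A} {b : ι → B} {p : A × B} :
    p ∈ BoxCl (⋃ i, pureTens (a i) (b i)) ↔
      ∀ u v, (∀ i, a i ≤ u ∨ b i ≤ v) → p.1 ≤ u ∨ p.2 ≤ v := by
  simp only [BoxCl, Set.mem_iInter, iUnion_pureTens_subset_pureBox_iff]
  rfl

end BoxClosure

section LatticePolynomial

variable {L : Type*} [Lattice L] [OrderBot L] {n : ℕ}

theorem le_Pc_iff {c : Finset (Finset (Fin n))} (hc : c.Nonempty) {x : Fin n → L} {z : L} :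
    z ≤ Pc c x ↔ ∀ X ∈ c, z ≤ X.sup x := by
  rw [Pc, dif_pos hc, le_inf'_iff]

theorem Pc_le_sup {c : Finset (Finset (Fin n))} {X : Finset (Fin n)} (hX : X ∈ c)
    (x : Fin n → L) : Pc c x ≤ X.sup x := by
  rw [Pc, dif_pos ⟨X, hX⟩]
  exact inf'_le _ hX

end LatticePolynomial

section FreeDistributive

variable {n : ℕ}

theorem mem_cstar {c : Finset (Finset (Fin n))} {X : Finset (Fin n)} :
    X ∈ cstar c ↔ Xᶜ ∉ c := by
  simp [cstar]

theorem FD.nonempty {c : Finset (Finset (Fin n))} (hc : c ∈ FD n) : c.Nonempty :=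
  ⟨univ, hc.2.2⟩

theorem FD.cstar_nonempty {c : Finset (Finset (Fin n))} (hc : c ∈ FD n) :
    (cstar c).Nonempty :=
  ⟨univ, mem_cstar.2 (by simpa using hc.2.1)⟩

theorem singleton_univ_mem_FD [NeZero n] : ({univ} : Finset (Finset (Fin n))) ∈ FD n := by
  refine ⟨fun X hX Y hXY => ?_, fun h => ?_, mem_singleton_self _⟩
  · rw [mem_singleton] at hX ⊢
    exact eq_univ_of_forall fun i => hXY (hX ▸ mem_univ i)
  · exact univ_nonempty.ne_empty (mem_singleton.1 h).symm

open Classical in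
noncomputable def supAbove {L : Type*} [Lattice L] [OrderBot L] (a : Fin n → L) (x : L) :
    Finset (Finset (Fin n)) :=
  univ.filter fun X => x ≤ X.sup a

variable {L : Type*} [Lattice L] [OrderBot L]

theorem mem_supAbove {a : Fin n → L} {x : L} {X : Finset (Fin n)} :
    X ∈ supAbove a x ↔ x ≤ X.sup a := by
  simp [supAbove]

theorem supAbove_mem_FD {a : Fin n → L} {x : L} (hx : ¬IsBot x) (hxa : x ≤ univ.sup a) :
    supAbove a x ∈ FD n := by
  refine ⟨fun X hX Y hXY => ?_, fun h => hx ?_, mem_supAbove.2 hxa⟩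
  · exact mem_supAbove.2 ((mem_supAbove.1 hX).trans (sup_mono hXY))
  · exact isBot_iff_eq_bot.2 (le_bot_iff.1 (mem_supAbove.1 h))

theorem le_Pc_supAbove {a : Fin n → L} {x : L} (h : supAbove a x ∈ FD n) :
    x ≤ Pc (supAbove a x) a :=
  (le_Pc_iff (FD.nonempty h)).2 fun _ => mem_supAbove.1

end FreeDistributive

section TensorClosure

variable {A B : Type*} [Lattice A] [OrderBot A] [Lattice B] [OrderBot B] {n : ℕ}

theorem Pc_le_or_Pc_cstar_le (c : Finset (Finset (Fin n))) {a : Fin n → A} {b : Fin n → B}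
    {u : A} {v : B} (h : ∀ i, a i ≤ u ∨ b i ≤ v) : Pc c a ≤ u ∨ Pc (cstar c) b ≤ v := by
  classical
  set S := univ.filter fun i => a i ≤ u
  by_cases hS : S ∈ c
  · refine Or.inl ((Pc_le_sup hS a).trans (Finset.sup_le fun i hi => ?_))
    exact (mem_filter.1 hi).2
  · have hSc : Sᶜ ∈ cstar c := mem_cstar.2 (by rwa [compl_compl])
    refine Or.inr ((Pc_le_sup hSc b).trans (Finset.sup_le fun i hi => ?_))
    exact (h i).resolve_left fun hi' => mem_compl.1 hi (by simp [S, hi'])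

theorem pureTens_Pc_subset_BoxCl (c : Finset (Finset (Fin n))) (a : Fin n → A) (b : Fin n → B) :
    pureTens (Pc c a) (Pc (cstar c) b) ⊆ BoxCl (⋃ i, pureTens (a i) (b i)) :=
  subset_BoxCl_iff.2 fun _ _ h => pureTens_subset_pureBox_iff.2
    (Pc_le_or_Pc_cstar_le c (iUnion_pureTens_subset_pureBox_iff.1 h))

theorem BoxCl_iUnion_pureTens_subset [NeZero n] (a : Fin n → A) (b : Fin n → B) :
    BoxCl (⋃ i, pureTens (a i) (b i)) ⊆
      ⋃ c ∈ FD n, pureTens (Pc c a) (Pc (cstar c) b) := by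
  rintro ⟨x, y⟩ hxy
  have hcl := mem_BoxCl_iUnion_pureTens_iff.1 hxy
  simp only [Set.mem_iUnion]
  by_cases hbot : IsBot x ∨ IsBot y
  · exact ⟨{univ}, singleton_univ_mem_FD, Or.inr hbot⟩
  obtain ⟨hx, hy⟩ := not_or.1 hbot
  have hyb : ¬y ≤ ⊥ := fun h => hy (isBot_iff_eq_bot.2 (le_bot_iff.1 h))
  have hc : supAbove a x ∈ FD n := supAbove_mem_FD hx
    ((hcl _ ⊥ fun i => Or.inl (le_sup (mem_univ i))).resolve_right hyb)
  refine ⟨supAbove a x, hc, Or.inl ⟨le_Pc_supAbove hc, ?_⟩⟩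
  refine (le_Pc_iff (FD.cstar_nonempty hc)).2 fun X hX => ?_
  have hcover : ∀ i, a i ≤ Xᶜ.sup a ∨ b i ≤ X.sup b := fun i => by
    by_cases hi : i ∈ X
    · exact Or.inr (le_sup hi)
    · exact Or.inl (le_sup (mem_compl.2 hi))
  exact (hcl _ _ hcover).resolve_left fun h => mem_cstar.1 hX (mem_supAbove.2 h)

end TensorClosure

/-- The box closure of a finite union of pure lattice tensors, computed by the
free-distributive-lattice formula. -/
theorem stmt_12 {A B : Type*} [Lattice A] [OrderBot A] [Lattice B] [OrderBot B]
    (n : ℕ) (a : Fin (n + 1) → A) (b : Fin (n + 1) → B) :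
    BoxCl (⋃ i, pureTens (a i) (b i)) =
      ⋃ c ∈ FD (n + 1), pureTens (Pc c a) (Pc (cstar c) b) :=
  (BoxCl_iUnion_pureTens_subset a b).antisymm
    (Set.iUnion₂_subset fun c _ => pureTens_Pc_subset_BoxCl c a b)
end
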